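/- Let Ω be an ω-monoid with at least one nonzero element whose minimal generating set G(Ω) = Ω* \ (Ω* + Ω*) is finite and commensurable (λ/μ ∈ ℚ for all λ, μ ∈ G(Ω)). Then there exists a real number α > 0 such that α·Ω ⊆ ℕ; consequently Ω is a positive scalar multiple of a numerical semigroup. -/

import Mathlib

open Pointwise

/-!
Since the enumeration of `Ω` is increasing, `Ω` is well-ordered, and well-founded induction
writes every element as a sum of minimal generators. Commensurability of the finitely many
generators provides a common denominator `α` with `α • G(Ω) ⊆ ℤ`, hence `α • Ω ⊆ ℕ`.
Dividing the additive submonoid `α • Ω` of `ℕ` by its gcd `d` leaves a submonoid `S` of gcd one,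
which is cofinite by the Frobenius-number theorem; then `Ω = (d / α) • S`.
-/

def minimalGenerators {M : Type*} [AddZeroClass M] (Ω : Set M) : Set M :=
  (Ω \ {0}) \ ((Ω \ {0}) + (Ω \ {0}))

def IsNumericalSemigroup (S : Set ℕ) : Prop :=
  0 ∈ S ∧ (∀ x ∈ S, ∀ y ∈ S, x + y ∈ S) ∧ Sᶜ.Finite

theorem subset_closure_minimalGenerators {M : Type*} [AddCommMonoid M] [LinearOrder M]
    [IsOrderedCancelAddMonoid M] {Ω : Set M} (hwf : Ω.IsWF) (hnonneg : ∀ x ∈ Ω, 0 ≤ x) :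
    Ω ⊆ AddSubmonoid.closure (minimalGenerators Ω) := by
  intro x hx
  refine hwf.induction hx fun y hy ih => ?_
  by_cases hy0 : y = 0
  · rw [hy0]
    exact zero_mem _
  by_cases hyG : y ∈ minimalGenerators Ω
  · exact AddSubmonoid.subset_closure hyG
  obtain ⟨u, hu, v, hv, rfl⟩ : y ∈ (Ω \ {0}) + (Ω \ {0}) := by
    by_contra h
    exact hyG ⟨⟨hy, hy0⟩, h⟩
  have hu0 : 0 < u := (hnonneg u hu.1).lt_of_ne' hu.2
  have hv0 : 0 < v := (hnonneg v hv.1).lt_of_ne' hv.2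
  exact add_mem (ih u hu.1 (lt_add_of_pos_right u hv0)) (ih v hv.1 (lt_add_of_pos_left v hu0))

theorem exists_pos_nat_mul_eq_intCast {s : Set ℚ} (hs : s.Finite) :
    ∃ N : ℕ, 0 < N ∧ ∀ q ∈ s, ∃ z : ℤ, (N : ℚ) * q = z := by
  refine ⟨∏ q ∈ hs.toFinset, q.den, Finset.prod_pos fun q _ => q.den_pos, fun q hq => ?_⟩
  obtain ⟨m, hm⟩ := Finset.dvd_prod_of_mem Rat.den (hs.mem_toFinset.mpr hq)
  refine ⟨m * q.num, ?_⟩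
  rw [hm]
  push_cast
  rw [mul_comm (q.den : ℚ), mul_assoc, Rat.den_mul_eq_num]

theorem exists_pos_mul_eq_intCast_of_div_eq_ratCast {K : Type*} [Field K] [LinearOrder K]
    [IsStrictOrderedRing K] {G : Set K} (hG : G.Finite) {g₀ : K} (hg₀ : 0 < g₀)
    (hrat : ∀ g ∈ G, ∃ q : ℚ, g / g₀ = q) :
    ∃ α : K, 0 < α ∧ ∀ g ∈ G, ∃ z : ℤ, α * g = z := by
  have hfin : ((fun q : ℚ => (q : K) * g₀) ⁻¹' G).Finite :=
    hG.preimage fun q _ r _ h => by exact_mod_cast mul_right_cancel₀ hg₀.ne' h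
  obtain ⟨N, hN, hint⟩ := exists_pos_nat_mul_eq_intCast hfin
  refine ⟨N / g₀, by positivity, fun g hg => ?_⟩
  obtain ⟨q, hq⟩ := hrat g hg
  have hgq : (q : K) * g₀ = g := by
    rw [← hq]
    field_simp
  obtain ⟨z, hz⟩ := hint q (by simpa only [Set.mem_preimage, hgq])
  refine ⟨z, ?_⟩
  calc N / g₀ * g = N * q := by
        rw [← hgq]
        field_simp
    _ = z := by exact_mod_cast hz

theorem exists_mul_eq_intCast_of_mem_closure {R : Type*} [Ring R] {G : Set R} {α : R}
    (hint : ∀ g ∈ G, ∃ z : ℤ, α * g = z) {x : R} (hx : x ∈ AddSubmonoid.closure G) :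
    ∃ z : ℤ, α * x = z := by
  induction hx using AddSubmonoid.closure_induction with
  | mem g hg => exact hint g hg
  | zero => exact ⟨0, by simp⟩
  | add x y _ _ hx hy =>
    obtain ⟨zx, hzx⟩ := hx
    obtain ⟨zy, hzy⟩ := hy
    exact ⟨zx + zy, by rw [mul_add, hzx, hzy, Int.cast_add]⟩

theorem Nat.isNumericalSemigroup_of_setGcd_eq_one (S : AddSubmonoid ℕ)
    (h : Nat.setGcd S = 1) : IsNumericalSemigroup S := by
  obtain ⟨n, hn⟩ := Nat.exists_mem_closure_of_ge (S : Set ℕ)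
  refine ⟨S.zero_mem, fun x hx y hy => S.add_mem hx hy,
    (Set.finite_lt_nat n).subset fun m hm => ?_⟩
  by_contra hlt
  exact hm (by simpa using hn m (not_lt.mp hlt) (h ▸ one_dvd m))

theorem Nat.exists_eq_image_mul_isNumericalSemigroup (T : AddSubmonoid ℕ) (hT : T ≠ ⊥) :
    ∃ d : ℕ, 0 < d ∧ ∃ S : Set ℕ, IsNumericalSemigroup S ∧ (T : Set ℕ) = (d * ·) '' S := by
  set d := Nat.setGcd T
  have hd : d ≠ 0 := fun h =>
    hT ((AddSubmonoid.eq_bot_iff_forall T).mpr (Nat.setGcd_eq_zero_iff.mp h))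
  let S := T.comap (AddMonoidHom.mulLeft d)
  have hgcd : Nat.setGcd S = 1 := by
    have hdvd : d * Nat.setGcd S ∣ d * 1 := by
      rw [mul_one]
      refine Nat.dvd_setGcd_iff.mpr fun m hm => ?_
      obtain ⟨k, rfl⟩ := Nat.setGcd_dvd_of_mem hm
      exact mul_dvd_mul_left d (Nat.setGcd_dvd_of_mem (show k ∈ S from hm))
    exact Nat.dvd_one.mp ((mul_dvd_mul_iff_left hd).mp hdvd)
  refine ⟨d, Nat.pos_of_ne_zero hd, S, Nat.isNumericalSemigroup_of_setGcd_eq_one S hgcd, ?_⟩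
  ext m
  constructor
  · intro hm
    obtain ⟨k, rfl⟩ := Nat.setGcd_dvd_of_mem hm
    exact ⟨k, hm, rfl⟩
  · rintro ⟨k, hk, rfl⟩
    exact hk

theorem AddSubmonoid.exists_eq_image_mul_isNumericalSemigroup (M : AddSubmonoid ℝ) (hM : M ≠ ⊥)
    {α : ℝ} (hα : 0 < α) (hint : ∀ x ∈ M, ∃ n : ℕ, α * x = n) :
    ∃ l : ℝ, 0 < l ∧ ∃ S : Set ℕ, IsNumericalSemigroup S ∧
      (M : Set ℝ) = (fun s : ℕ => l * (s : ℝ)) '' S := by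
  let f : ℕ →+ ℝ := (AddMonoidHom.mulLeft α⁻¹).comp (Nat.castAddMonoidHom ℝ)
  have hf : ∀ x ∈ M, ∃ n : ℕ, f n = x := fun x hx => by
    obtain ⟨n, hn⟩ := hint x hx
    exact ⟨n, by simp [f, ← hn, hα.ne']⟩
  have hMf : (M : Set ℝ) = f '' M.comap f := by
    ext x
    constructor
    · intro hx
      obtain ⟨n, hn⟩ := hf x hx
      exact ⟨n, by simpa [hn] using hx, hn⟩
    · rintro ⟨n, hn, rfl⟩
      exact hn
  have hT : M.comap f ≠ ⊥ := by
    obtain ⟨x, hx, hx0⟩ := (M.bot_or_exists_ne_zero).resolve_left hM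
    obtain ⟨n, rfl⟩ := hf x hx
    exact fun h => hx0 (by rw [(eq_bot_iff_forall _).mp h n hx, map_zero])
  obtain ⟨d, hd, S, hS, hTS⟩ := Nat.exists_eq_image_mul_isNumericalSemigroup _ hT
  refine ⟨d / α, by positivity, S, hS, ?_⟩
  rw [hMf, hTS, Set.image_image]
  congr! 1 with s
  simp only [AddMonoidHom.coe_comp, AddMonoidHom.coe_mulLeft, Nat.coe_castAddMonoidHom,
    Function.comp_apply, Nat.cast_mul, f]
  ring

/-- An ω-monoid with a nonzero element whose minimal generating set is finite and
commensurable can be rescaled into `ℕ`; consequently it is a positive scalar multiple of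
a numerical semigroup. -/
theorem finite_commensurable_generating_set_scaled_numerical_semigroup
    (Ω : Set ℝ) (a : ℕ → ℝ)
    (hadd : ∀ x ∈ Ω, ∀ y ∈ Ω, x + y ∈ Ω)
    (hmono : StrictMono a) (h0 : a 0 = 0) (hrange : Set.range a = Ω)
    (hne : ∃ x ∈ Ω, x ≠ 0)
    (hfin : ((Ω \ {0}) \ ((Ω \ {0}) + (Ω \ {0}))).Finite)
    (hcomm : ∀ l ∈ (Ω \ {0}) \ ((Ω \ {0}) + (Ω \ {0})),
      ∀ m ∈ (Ω \ {0}) \ ((Ω \ {0}) + (Ω \ {0})),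
        l ≠ 0 → m ≠ 0 → ∃ q : ℚ, l / m = (q : ℝ)) :
    (∃ α : ℝ, 0 < α ∧ ∀ x ∈ Ω, ∃ n : ℕ, α * x = (n : ℝ)) ∧
      ∃ l : ℝ, 0 < l ∧ ∃ S : Set ℕ,
        (0 ∈ S ∧ (∀ x ∈ S, ∀ y ∈ S, x + y ∈ S) ∧ Sᶜ.Finite) ∧
        Ω = (fun s : ℕ => l * (s : ℝ)) '' S := by
  have hwf : Ω.IsWF := by
    rw [← hrange, ← Set.image_univ]
    exact ((Set.isPWO_of_wellQuasiOrderedLE _).image_of_monotone hmono.monotone).isWF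
  have hnonneg : ∀ x ∈ Ω, 0 ≤ x := by
    rw [← hrange, ← h0]
    rintro _ ⟨n, rfl⟩
    exact hmono.monotone n.zero_le
  have hgen := subset_closure_minimalGenerators hwf hnonneg
  obtain ⟨x, hxΩ, hx0⟩ := hne
  obtain ⟨g₀, hg₀⟩ : (minimalGenerators Ω).Nonempty := by
    by_contra hempty
    have hx := hgen hxΩ
    rw [Set.not_nonempty_iff_eq_empty.mp hempty, AddSubmonoid.closure_empty] at hx
    exact hx0 hx
  obtain ⟨α, hα, hαG⟩ := exists_pos_mul_eq_intCast_of_div_eq_ratCast hfin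
    ((hnonneg g₀ hg₀.1.1).lt_of_ne' hg₀.1.2) fun g hg => hcomm g hg g₀ hg₀ hg.1.2 hg₀.1.2
  have hαΩ : ∀ x ∈ Ω, ∃ n : ℕ, α * x = n := fun x hx => by
    obtain ⟨z, hz⟩ := exists_mul_eq_intCast_of_mem_closure hαG (hgen hx)
    lift z to ℕ using by exact_mod_cast hz ▸ mul_nonneg hα.le (hnonneg x hx)
    exact ⟨z, hz⟩
  let M : AddSubmonoid ℝ := ⟨⟨Ω, fun hx hy => hadd _ hx _ hy⟩, hrange ▸ ⟨0, h0⟩⟩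
  have hM : M ≠ ⊥ := fun h => hx0 ((AddSubmonoid.eq_bot_iff_forall M).mp h x hxΩ)
  exact ⟨⟨α, hα, hαΩ⟩, M.exists_eq_image_mul_isNumericalSemigroup hM hα hαΩ⟩
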